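/- Iteration lemma yielding Hölder-type oscillation decay: Let u : ℝ^N × ℝ → ℝ be a bounded measurable function, let ρ > 0, ω > 0, 1 < p < 2, and suppose there exist constants a, ε* ∈ (0,1) and b, Γ > 1 such that, defining the sequences ρ_n := b^{−n} ρ (ρ₀ = ρ), ω_{n+1} := max{ a ω_n, Γ ρ_n^{ε*} } (ω₀ = ω), c_n := ω_n^{(p−2)/p}, and the cylinders Q_n := Q(ρ_n^p, c_n ρ_n), one has Q_{n+1} ⊆ Q_n and ess osc_{Q_n} u ≤ ω_n for all n = 0,1,2,…. Then there exist constants γ > 1 and α ∈ (0,1), determined a priori only in terms of a, b, Γ, ε*, p, such that for all 0 < r ≤ ρ, setting c₀ = ω^{(p−2)/p}, one has ess osc_{Q(r^p, c₀ r)} u ≤ γ (ω + ρ^{ε*}) (r/ρ)^α. -/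

import Mathlib

open MeasureTheory Metric Set

/-- The standard cylinder `Q(l,ρ) = B_ρ × (-l, 0] ⊆ ℝ^N × ℝ`. -/
def stdCyl (N : ℕ) (l ρ : ℝ) : Set (EuclideanSpace ℝ (Fin N) × ℝ) :=
  ball (0 : EuclideanSpace ℝ (Fin N)) ρ ×ˢ Set.Ioc (-l) 0

/-- Essential oscillation of `u` on `Q` with respect to Lebesgue measure. -/
noncomputable def essOsc {N : ℕ} (u : EuclideanSpace ℝ (Fin N) → ℝ → ℝ)
    (Q : Set (EuclideanSpace ℝ (Fin N) × ℝ)) : ℝ :=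
  essSup (fun q : EuclideanSpace ℝ (Fin N) × ℝ => u q.1 q.2) (volume.restrict Q) -
    essInf (fun q : EuclideanSpace ℝ (Fin N) × ℝ => u q.1 q.2) (volume.restrict Q)

/-- The radii sequence `ρ_n = b^{-n} ρ`. -/
noncomputable def radSeq (b ρ : ℝ) (n : ℕ) : ℝ := b ^ (-(n : ℝ)) * ρ

/-- The oscillation sequence `ω_0 = ω`, `ω_{n+1} = max {a ω_n, Γ ρ_n^{ε*}}`. -/
noncomputable def oscSeq (a Γ ε b ρ ω : ℝ) : ℕ → ℝ
  | 0 => ω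
  | n + 1 => max (a * oscSeq a Γ ε b ρ ω n) (Γ * radSeq b ρ n ^ ε)

/-!
With `L = max a (b⁻¹ ^ ε*)` the recursion gives `ω_n ≤ K L^n`, `K = (Γ / L) (ω + ρ^ε*)`.
Given `r`, let `n` be the last index with `r ≤ ρ_n` and `c₀ r ≤ c_n ρ_n`, so that
`Q(r^p, c₀ r) ⊆ Q_n` and the oscillation there is at most `min ω ω_n`. The failure of these
comparisons at `n + 1` gives `r / ρ ≥ (ω / K)^θ b^{-(n+1)}` with `θ = (2 - p) / p`, and the
interpolation `min ω ω_n ≤ ω^{θα} ω_n^{1-θα}` turns the geometric decay of `ω_n` into the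
power `(r / ρ)^α`, provided `b^α L^{1/2} ≤ 1`.
-/

open Real

section Cylinders

variable {N : ℕ}

lemma stdCyl_mono {l l' ρ ρ' : ℝ} (hl : l ≤ l') (hρ : ρ ≤ ρ') :
    stdCyl N l ρ ⊆ stdCyl N l' ρ' :=
  prod_mono (ball_subset_ball hρ) (Ioc_subset_Ioc (neg_le_neg hl) le_rfl)

lemma volume_stdCyl_ne_zero {l ρ : ℝ} (hl : 0 < l) (hρ : 0 < ρ) :
    volume (stdCyl N l ρ) ≠ 0 := by
  rw [stdCyl, Measure.volume_eq_prod, Measure.prod_prod, Real.volume_Ioc]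
  exact mul_ne_zero (measure_ball_pos _ _ hρ).ne' (by simpa using hl)

lemma essOsc_mono {u : EuclideanSpace ℝ (Fin N) → ℝ → ℝ} {B : ℝ} (hB : ∀ x t, |u x t| ≤ B)
    {Q Q' : Set (EuclideanSpace ℝ (Fin N) × ℝ)} (hQQ' : Q ⊆ Q') (hQ : volume Q ≠ 0) :
    essOsc u Q ≤ essOsc u Q' := by
  set f : EuclideanSpace ℝ (Fin N) × ℝ → ℝ := fun q => u q.1 q.2
  have hae : ae (volume.restrict Q) ≤ ae (volume.restrict Q') :=
    ae_mono (Measure.restrict_mono hQQ' le_rfl)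
  have : (ae (volume.restrict Q)).NeBot := ae_neBot.2 (by simpa [Measure.restrict_eq_zero])
  have hle : ∀ μ : Measure (EuclideanSpace ℝ (Fin N) × ℝ), (ae μ).IsBoundedUnder (· ≤ ·) f :=
    fun _ => Filter.isBoundedUnder_of ⟨B, fun q => (abs_le.1 (hB q.1 q.2)).2⟩
  have hge : ∀ μ : Measure (EuclideanSpace ℝ (Fin N) × ℝ), (ae μ).IsBoundedUnder (· ≥ ·) f :=
    fun _ => Filter.isBoundedUnder_of ⟨-B, fun q => (abs_le.1 (hB q.1 q.2)).1⟩
  exact sub_le_sub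
    (Filter.limsup_le_limsup_of_le hae (hge _).isCoboundedUnder_le (hle _))
    (Filter.liminf_le_liminf_of_le hae (hge _) (hle _).isCoboundedUnder_ge)

lemma essOsc_stdCyl_mono {u : EuclideanSpace ℝ (Fin N) → ℝ → ℝ} {B : ℝ}
    (hB : ∀ x t, |u x t| ≤ B) {l l' ρ ρ' : ℝ} (hl : 0 < l) (hρ : 0 < ρ) (hll' : l ≤ l')
    (hρρ' : ρ ≤ ρ') : essOsc u (stdCyl N l ρ) ≤ essOsc u (stdCyl N l' ρ') :=
  essOsc_mono hB (stdCyl_mono hll' hρρ') (volume_stdCyl_ne_zero hl hρ)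

end Cylinders

section Sequences

variable {a Γ ε b ρ ω L : ℝ}

lemma radSeq_eq (hb : 0 ≤ b) (ρ : ℝ) (n : ℕ) : radSeq b ρ n = b⁻¹ ^ n * ρ := by
  rw [radSeq, rpow_neg hb, rpow_natCast, inv_pow]

lemma exists_and_not_succ_of_le_radSeq {r : ℝ} {P : ℕ → Prop} (hb : 1 < b) (hr : 0 < r)
    (h0 : P 0) (hP : ∀ k, P k → r ≤ radSeq b ρ k) : ∃ n, P n ∧ ¬ P (n + 1) := by
  have hlim : Filter.Tendsto (fun k : ℕ => b⁻¹ ^ k * ρ) Filter.atTop (nhds (0 * ρ)) :=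
    (tendsto_pow_atTop_nhds_zero_of_lt_one (by positivity) (inv_lt_one_of_one_lt₀ hb)).mul_const ρ
  obtain ⟨k, hk⟩ := (hlim.eventually (gt_mem_nhds (by simpa using hr))).exists
  obtain ⟨n, hn, hn1⟩ := Nat.exists_not_and_succ_of_not_zero_of_exists (p := fun k => ¬ P k)
    (not_not.2 h0) ⟨k, fun hPk => (hP k hPk).not_gt (by rwa [radSeq_eq (by positivity)])⟩
  exact ⟨n, not_not.1 hn, hn1⟩

lemma oscSeq_pos (ha : 0 < a) (hω : 0 < ω) (n : ℕ) : 0 < oscSeq a Γ ε b ρ ω n := by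
  induction n with
  | zero => exact hω
  | succ n ih => exact (mul_pos ha ih).trans_le (le_max_left _ _)

lemma oscSeq_le (ha : 0 ≤ a) (haL : a ≤ L) (hbL : b⁻¹ ^ ε ≤ L) (hL : 0 < L) (hLΓ : L ≤ Γ)
    (hb : 0 ≤ b) (hρ : 0 ≤ ρ) (hω : 0 ≤ ω) (n : ℕ) :
    oscSeq a Γ ε b ρ ω n ≤ Γ / L * (ω + ρ ^ ε) * L ^ n := by
  have hΓ : 0 ≤ Γ := hL.le.trans hLΓ
  induction n with
  | zero =>
    rw [oscSeq, pow_zero, mul_one]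
    exact (le_add_of_nonneg_right (by positivity)).trans
      (le_mul_of_one_le_left (by positivity) ((one_le_div hL).2 hLΓ))
  | succ n ih =>
    refine max_le ?_ ?_
    · calc a * oscSeq a Γ ε b ρ ω n ≤ a * (Γ / L * (ω + ρ ^ ε) * L ^ n) := by gcongr
        _ ≤ L * (Γ / L * (ω + ρ ^ ε) * L ^ n) := by gcongr
        _ = _ := by ring
    · have hpow : radSeq b ρ n ^ ε = (b⁻¹ ^ ε) ^ n * ρ ^ ε := by
        rw [radSeq_eq hb, mul_rpow (by positivity) hρ, rpow_pow_comm (by positivity)]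
      calc Γ * radSeq b ρ n ^ ε ≤ Γ * (L ^ n * (ω + ρ ^ ε)) := by
            rw [hpow]
            gcongr
            exact le_add_of_nonneg_left hω
        _ = _ := by field_simp; ring

end Sequences

lemma le_rpow_mul_rpow_of_le_of_le {x y z e : ℝ} (hx : 0 ≤ x) (hy : 0 ≤ y) (hzx : z ≤ x)
    (hzy : z ≤ y) (he0 : 0 ≤ e) (he1 : e ≤ 1) : z ≤ x ^ e * y ^ (1 - e) := by
  rcases le_or_gt z 0 with hz | hz
  · exact hz.trans (by positivity)
  calc z = z ^ e * z ^ (1 - e) := by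
        rw [← rpow_add' hz.le (by norm_num), add_sub_cancel, rpow_one]
    _ ≤ x ^ e * y ^ (1 - e) := by gcongr

lemma exists_rpow_mul_sqrt_le_one {b L : ℝ} (hb : 1 < b) (hL0 : 0 < L) (hL1 : L < 1) :
    ∃ α : ℝ, 0 < α ∧ α ≤ 1 / 2 ∧ b ^ α * L ^ (1 / 2 : ℝ) ≤ 1 := by
  refine ⟨min (-logb b L / 2) (1 / 2), lt_min ?_ (by norm_num), min_le_right _ _, ?_⟩
  · linarith [logb_neg hb hL0 hL1]
  calc b ^ min (-logb b L / 2) (1 / 2) * L ^ (1 / 2 : ℝ)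
      ≤ b ^ (-logb b L / 2) * L ^ (1 / 2 : ℝ) := by
        gcongr
        · exact hb.le
        · exact min_le_left _ _
    _ = 1 := by
        rw [show -logb b L / 2 = logb b L * (-(1 / 2)) by ring, rpow_mul (by positivity),
          rpow_logb (by positivity) hb.ne' hL0, ← rpow_add hL0]
        norm_num

lemma rpow_div_mul_le_of_not_and {ω W K R r θ : ℝ} (hω : 0 < ω) (hW : 0 < W) (hWK : W ≤ K)
    (hωK : ω ≤ K) (hθ : 0 ≤ θ) (hR : 0 ≤ R)
    (h : ¬ (r ≤ R ∧ ω ^ (-θ) * r ≤ W ^ (-θ) * R)) : (ω / K) ^ θ * R ≤ r := by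
  have hK : 0 < K := hω.trans_le hωK
  rw [not_and_or, not_le, not_le] at h
  rcases h with hRr | hWr
  · calc (ω / K) ^ θ * R ≤ 1 * R := by
          gcongr
          exact rpow_le_one (by positivity) ((div_le_one hK).2 hωK) hθ
      _ ≤ r := by linarith
  · have hWω : (ω / W) ^ θ * R = W ^ (-θ) * R / ω ^ (-θ) := by
      rw [div_rpow hω.le hW.le, rpow_neg hω.le, rpow_neg hW.le]
      field_simp
    calc (ω / K) ^ θ * R ≤ (ω / W) ^ θ * R := by gcongr
      _ ≤ r := by
        rw [hWω, div_le_iff₀ (by positivity)]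
        linarith

lemma le_mul_rpow_of_le_of_le {M ω K L b α θ r ρ : ℝ} {n : ℕ} (hω : 0 < ω) (hωK : ω ≤ K)
    (hL : 0 < L) (hL1 : L ≤ 1) (hb : 0 < b) (hα : 0 ≤ α) (hθ : 0 ≤ θ) (hθα : θ * α ≤ 1 / 2)
    (hdecay : b ^ α * L ^ (1 / 2 : ℝ) ≤ 1) (hρ : 0 < ρ)
    (hr : (ω / K) ^ θ * (b⁻¹ ^ (n + 1) * ρ) ≤ r) (hMω : M ≤ ω) (hMn : M ≤ K * L ^ n) :
    M ≤ K * b ^ α * (r / ρ) ^ α := by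
  have hK : 0 < K := hω.trans_le hωK
  have hLb : L ^ (1 - θ * α) ≤ (b ^ α)⁻¹ :=
    calc L ^ (1 - θ * α) ≤ L ^ (1 / 2 : ℝ) := rpow_le_rpow_of_exponent_ge hL hL1 (by linarith)
      _ = (b ^ α)⁻¹ * (b ^ α * L ^ (1 / 2 : ℝ)) := by field_simp
      _ ≤ (b ^ α)⁻¹ := mul_le_of_le_one_right (by positivity) hdecay
  have hinterp : M / K ≤ (ω / K) ^ (θ * α) * (L ^ n) ^ (1 - θ * α) :=
    le_rpow_mul_rpow_of_le_of_le (by positivity) (by positivity)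
      (div_le_div_of_nonneg_right hMω hK.le) ((div_le_iff₀' hK).2 hMn)
      (by positivity) (by linarith)
  have hgeom : (L ^ n) ^ (1 - θ * α) ≤ b ^ α * (b ^ α)⁻¹ ^ (n + 1) := by
    rw [← rpow_pow_comm hL.le, pow_succ, mul_left_comm, mul_inv_cancel₀ (by positivity),
      mul_one]
    gcongr
  have hscale : (ω / K) ^ (θ * α) * (b ^ α)⁻¹ ^ (n + 1) ≤ (r / ρ) ^ α := by
    rw [rpow_mul (by positivity), ← inv_rpow hb.le, rpow_pow_comm (by positivity),
      ← mul_rpow (by positivity) (by positivity)]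
    gcongr
    rwa [le_div_iff₀ hρ, mul_assoc]
  calc M = K * (M / K) := by field_simp
    _ ≤ K * ((ω / K) ^ (θ * α) * (b ^ α * (b ^ α)⁻¹ ^ (n + 1))) := by
        gcongr
        exact hinterp.trans (by gcongr)
    _ = K * b ^ α * ((ω / K) ^ (θ * α) * (b ^ α)⁻¹ ^ (n + 1)) := by ring
    _ ≤ K * b ^ α * (r / ρ) ^ α := by gcongr

/-- Iteration lemma yielding Hölder-type decay of the essential oscillation. -/
theorem iteration_lemma_holder_decay
    (a ε' b Γ p : ℝ) (ha : a ∈ Set.Ioo (0:ℝ) 1) (hε' : ε' ∈ Set.Ioo (0:ℝ) 1)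
    (hb : 1 < b) (hΓ : 1 < Γ) (hp1 : 1 < p) (hp2 : p < 2) :
    ∃ γ : ℝ, 1 < γ ∧ ∃ α ∈ Set.Ioo (0:ℝ) 1,
      ∀ (N : ℕ), 1 ≤ N →
      ∀ (u : EuclideanSpace ℝ (Fin N) → ℝ → ℝ),
        Measurable (fun q : EuclideanSpace ℝ (Fin N) × ℝ => u q.1 q.2) →
        (∃ B : ℝ, ∀ x t, |u x t| ≤ B) →
      ∀ (ρ ω : ℝ), 0 < ρ → 0 < ω →
        (∀ n : ℕ,
          stdCyl N (radSeq b ρ (n + 1) ^ p)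
            (oscSeq a Γ ε' b ρ ω (n + 1) ^ ((p - 2) / p) * radSeq b ρ (n + 1)) ⊆
          stdCyl N (radSeq b ρ n ^ p)
            (oscSeq a Γ ε' b ρ ω n ^ ((p - 2) / p) * radSeq b ρ n)) →
        (∀ n : ℕ,
          essOsc u (stdCyl N (radSeq b ρ n ^ p)
            (oscSeq a Γ ε' b ρ ω n ^ ((p - 2) / p) * radSeq b ρ n)) ≤
          oscSeq a Γ ε' b ρ ω n) →
      ∀ r : ℝ, 0 < r → r ≤ ρ →
        essOsc u (stdCyl N (r ^ p) (ω ^ ((p - 2) / p) * r)) ≤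
          γ * (ω + ρ ^ ε') * (r / ρ) ^ α := by
  obtain ⟨ha0, ha1⟩ := ha
  have hb0 : 0 < b := one_pos.trans hb
  set L := max a (b⁻¹ ^ ε')
  have hL0 : 0 < L := lt_max_of_lt_left ha0
  have hL1 : L < 1 := max_lt ha1 (rpow_lt_one (by positivity) (inv_lt_one_of_one_lt₀ hb) hε'.1)
  obtain ⟨α, hα0, hα, hdecay⟩ := exists_rpow_mul_sqrt_le_one hb hL0 hL1
  refine ⟨Γ / L * b ^ α, one_lt_mul_of_lt_of_le ((one_lt_div hL0).2 (hL1.trans hΓ))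
    (one_le_rpow hb.le hα0.le), α, ⟨hα0, by linarith⟩, ?_⟩
  intro N _ u _ ⟨B, hB⟩ ρ ω hρ hω _ hosc r hr hrρ
  set θ := (2 - p) / p
  rw [show (p - 2) / p = -θ by ring] at hosc ⊢
  have hθ0 : 0 ≤ θ := div_nonneg (by linarith) (by linarith)
  have hθα : θ * α ≤ 1 / 2 :=
    (mul_le_of_le_one_left hα0.le ((div_le_one (by linarith)).2 (by linarith))).trans hα
  set W := oscSeq a Γ ε' b ρ ω
  set K := Γ / L * (ω + ρ ^ ε')
  have hWK (k : ℕ) : W k ≤ K * L ^ k :=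
    oscSeq_le ha0.le (le_max_left _ _) (le_max_right _ _) hL0 (hL1.trans hΓ).le hb0.le hρ.le
      hω.le k
  have hωK : ω ≤ K := by simpa [W, oscSeq] using hWK 0
  let P (k : ℕ) : Prop := r ≤ radSeq b ρ k ∧ ω ^ (-θ) * r ≤ W k ^ (-θ) * radSeq b ρ k
  have hP0 : P 0 := ⟨by simpa [radSeq] using hrρ, by simpa [radSeq, W, oscSeq] using by gcongr⟩
  have hosc_le {k : ℕ} (hk : P k) :
      essOsc u (stdCyl N (r ^ p) (ω ^ (-θ) * r)) ≤ W k :=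
    (essOsc_stdCyl_mono hB (by positivity) (by positivity)
      (rpow_le_rpow hr.le hk.1 (by linarith)) hk.2).trans (hosc k)
  obtain ⟨n, hn, hn1⟩ := exists_and_not_succ_of_le_radSeq hb hr hP0 fun _ h => h.1
  have hlow : (ω / K) ^ θ * (b⁻¹ ^ (n + 1) * ρ) ≤ r := by
    rw [← radSeq_eq hb0.le]
    refine rpow_div_mul_le_of_not_and hω (oscSeq_pos ha0 hω _) ?_ hωK hθ0
      (radSeq_eq hb0.le ρ _ ▸ by positivity) hn1
    exact (hWK _).trans (mul_le_of_le_one_right (hω.le.trans hωK) (pow_le_one₀ hL0.le hL1.le))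
  calc essOsc u (stdCyl N (r ^ p) (ω ^ (-θ) * r)) ≤ K * b ^ α * (r / ρ) ^ α :=
        le_mul_rpow_of_le_of_le hω hωK hL0 hL1.le hb0 hα0.le hθ0 hθα hdecay hρ hlow
          (hosc_le hP0) ((hosc_le hn).trans (hWK n))
    _ = Γ / L * b ^ α * (ω + ρ ^ ε') * (r / ρ) ^ α := by ring
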